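/- Fix I, S, J ≥ 1, β > 0, inspection indices i = 1,…,I, groups s = 1,…,S with stress vectors x_s ∈ ℝ^J, and integers 0 ≤ n_{is} ≤ K_{is} with K_{is} ≥ 1 and K = Σ_{i,s} K_{is}. For θ = (η, α) ∈ ℝ^I × ℝ^J set γ(y) = 1 − exp(−exp(y)), G_i(η) = ∏_{m=i}^{I} γ(η_m), λ_s(α) = exp(Σ_{j} α_j x_{sj}), R_{is}(θ) = (1 − G_i(η))^{λ_s(α)}, π_{is1}(θ) = 1 − R_{is}(θ), π_{is2}(θ) = R_{is}(θ), and define the objective F(θ) = Σ_{i,s} (K_{is}/K) [ π_{is1}^{β+1} + π_{is2}^{β+1} − ((β+1)/β)( (n_{is}/K_{is}) π_{is1}^{β} + ((K_{is}−n_{is})/K_{is}) π_{is2}^{β} ) ]. Then for each u ∈ {1,…,I}: ∂F/∂η_u (θ) = −((β+1)/K) Σ_{i,s} δ^{η}_{is,u}(θ) ( K_{is} π_{is1}(θ) − n_{is} ) [ π_{is1}(θ)^{β−1} + π_{is2}(θ)^{β−1} ], where δ^{η}_{is,u}(θ) = −(1 − G_i(η))^{λ_s(α) − 1} λ_s(α)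 · ∂G_i/∂η_u(η) (and ∂G_i/∂η_u(η) = exp(η_u)exp(−exp(η_u)) G_i(η)/γ(η_u) if i ≤ u and 0 otherwise); and for each j ∈ {1,…,J}: ∂F/∂α_j (θ) = −((β+1)/K) Σ_{i,s} δ^{α}_{is,j}(θ) ( K_{is} π_{is1}(θ) − n_{is} ) [ π_{is1}(θ)^{β−1} + π_{is2}(θ)^{β−1} ], where δ^{α}_{is,j}(θ) = (1 − G_i(η))^{λ_s(α)} log(1 − G_i(η)) λ_s(α) x_{sj}. Consequently, θ is a critical point of F if and only if the estimating equations Σ_{i,s} δ^{η}_{is,u}(θ)(K_{is}(1 − R_{is}(θ)) − n_{is})[(1 − R_{is}(θ))^{β−1} + R_{is}(θ)^{β−1}] = 0 for all u and Σ_{i,s} δ^{α}_{is,j}(θ)(K_{is}(1 − R_{is}(θ)) − n_{is})[(1 − R_{is}(θ))^{β−1} + R_{is}(θ)^{β−1}] = 0 for all j hold. -/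

import Mathlib

/-!
As a function of the model probability `p = R` of the second cell, the DPD kernel has derivative
`-((β+1)/K) (K (1-p) - n) ((1-p)^(β-1) + p^(β-1))`: the terms with exponent `β` combine because
`p^β = p · p^(β-1)`. By the chain rule it remains to differentiate `R = (1 - G)^λ`: in `η_u` only
the factor `γ(η_u)` of the product `G_i` moves (and none does when `u < i`), in `α_j` only the
exponent `λ`. The common factor `-(β+1)/K` is nonzero, so the critical points of `F` are exactly
the solutions of the estimating equations.
-/

open Finset Real Function

theorem Finset.prod_mem_Ioo_zero_one {ι R : Type*} [CommSemiring R] [PartialOrder R]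
    [IsStrictOrderedRing R] {s : Finset ι} {f : ι → R} (hs : s.Nonempty)
    (hf : ∀ m ∈ s, f m ∈ Set.Ioo 0 1) : ∏ m ∈ s, f m ∈ Set.Ioo 0 1 := by
  obtain ⟨i, hi⟩ := hs
  classical
  have hrest : ∏ m ∈ s \ {i}, f m ≤ 1 :=
    prod_le_one (fun m hm => (hf m (mem_sdiff.1 hm).1).1.le)
      (fun m hm => (hf m (mem_sdiff.1 hm).1).2.le)
  refine ⟨prod_pos fun m hm => (hf m hm).1, ?_⟩
  calc ∏ m ∈ s, f m = f i * ∏ m ∈ s \ {i}, f m := prod_eq_mul_prod_sdiff_singleton_of_mem hi f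
    _ ≤ f i * 1 := mul_le_mul_of_nonneg_left hrest (hf i hi).1.le
    _ < 1 := by simpa using (hf i hi).2

theorem Real.one_sub_rpow_mem_Ioo {a L : ℝ} (ha : a ∈ Set.Ioo 0 1) (hL : 0 < L) :
    (1 - a) ^ L ∈ Set.Ioo 0 1 :=
  ⟨rpow_pos_of_pos (by linarith [ha.2]) L, rpow_lt_one (by linarith [ha.2]) (by linarith [ha.1]) hL⟩

theorem one_sub_exp_neg_exp_mem_Ioo (y : ℝ) : 1 - exp (-exp y) ∈ Set.Ioo 0 1 :=
  ⟨by simpa using exp_pos y, by linarith [exp_pos (-exp y)]⟩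

theorem hasDerivAt_one_sub_exp_neg_exp (y : ℝ) :
    HasDerivAt (fun y => 1 - exp (-exp y)) (exp y * exp (-exp y)) y := by
  simpa [mul_comm] using ((hasDerivAt_exp y).neg.exp).const_sub 1

theorem HasDerivAt.hasDerivAt_zero_iff_of_mul {𝕜 : Type*} [NontriviallyNormedField 𝕜]
    {f : 𝕜 → 𝕜} {c e x : 𝕜} (hf : HasDerivAt f (c * e) x) (hc : c ≠ 0) :
    HasDerivAt f 0 x ↔ e = 0 :=
  ⟨fun h => (mul_eq_zero.1 (hf.unique h)).resolve_left hc, fun he => by simpa [he] using hf⟩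

section Update

variable {ι : Type*} [DecidableEq ι]

theorem hasDerivAt_prod_comp_update {s : Finset ι} {u : ι} (hu : u ∈ s) (η : ι → ℝ)
    {g : ℝ → ℝ} {g' : ℝ} (hg : HasDerivAt g g' (η u)) :
    HasDerivAt (fun t => ∏ m ∈ s, g (update η u t m)) (g' * ∏ m ∈ s \ {u}, g (η m)) (η u) := by
  simp only [← comp_apply (f := g), comp_update, prod_update_of_mem hu]
  exact hg.mul_const _

theorem hasDerivAt_one_sub_prod_comp_update_rpow (s : Finset ι) (η : ι → ℝ) {u : ι} (L : ℝ)
    {g : ℝ → ℝ} {g' : ℝ} (hg : HasDerivAt g g' (η u)) (hg0 : g (η u) ≠ 0)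
    (hs : ∏ m ∈ s, g (η m) ≠ 1) :
    HasDerivAt (fun t => (1 - ∏ m ∈ s, g (update η u t m)) ^ L)
      (-(1 - ∏ m ∈ s, g (η m)) ^ (L - 1) * L *
        (if u ∈ s then g' * (∏ m ∈ s, g (η m)) / g (η u) else 0)) (η u) := by
  split_ifs with hu
  · have hbase : 1 - ∏ m ∈ s, g (update η u (η u) m) ≠ 0 := by
      rw [update_eq_self]; exact sub_ne_zero.2 hs.symm
    convert ((hasDerivAt_prod_comp_update hu η hg).const_sub 1).rpow_const (Or.inl hbase) using 1
    simp only [update_eq_self, prod_eq_mul_prod_sdiff_singleton_of_mem hu (fun m => g (η m))]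
    field_simp
  · simp only [← comp_apply (f := g), comp_update, prod_update_of_notMem hu, mul_zero]
    exact hasDerivAt_const _ _

variable [Fintype ι]

theorem hasDerivAt_sum_update_mul (α x : ι → ℝ) (j : ι) :
    HasDerivAt (fun t => ∑ m, update α j t m * x m) (x j) (α j) := by
  have hα := hasDerivAt_pi.1 (hasDerivAt_update α j (α j))
  simpa [Pi.single_apply, ite_mul] using
    HasDerivAt.fun_sum (u := univ) fun m _ => (hα m).mul_const (x m)

theorem hasDerivAt_rpow_exp_sum_update_mul {b : ℝ} (hb : 0 < b) (α x : ι → ℝ) (j : ι) :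
    HasDerivAt (fun t => b ^ exp (∑ m, update α j t m * x m))
      (b ^ exp (∑ m, α m * x m) * log b * exp (∑ m, α m * x m) * x j) (α j) := by
  convert (hasDerivAt_sum_update_mul α x j).exp.const_rpow hb using 1
  rw [update_eq_self]
  ring

end Update

/-- The kernel `d*_β` between the empirical cell `(n/K, (K-n)/K)` and the model cell `(1 - p, p)`;
in `F` the argument `p` is `R = π₂`. -/
noncomputable def dpdKernel (β K n p : ℝ) : ℝ :=
  (1 - p) ^ (β + 1) + p ^ (β + 1) - ((β + 1) / β) * ((n / K) * (1 - p) ^ β + ((K - n) / K) * p ^ β)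

theorem hasDerivAt_dpdKernel {β K n p : ℝ} (hβ : β ≠ 0) (hK : K ≠ 0) (hp : p ∈ Set.Ioo 0 1) :
    HasDerivAt (dpdKernel β K n)
      (-((β + 1) / K) * (K * (1 - p) - n) * ((1 - p) ^ (β - 1) + p ^ (β - 1))) p := by
  have hp0 : p ≠ 0 := hp.1.ne'
  have hq0 : 1 - p ≠ 0 := by linarith [hp.2]
  have hq : HasDerivAt (fun p => 1 - p) (-1) p := by simpa using (hasDerivAt_id p).const_sub 1
  have hpow : ∀ e, HasDerivAt (fun p => (1 - p) ^ e) (-1 * e * (1 - p) ^ (e - 1)) p ∧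
      HasDerivAt (fun p => p ^ e) (1 * e * p ^ (e - 1)) p :=
    fun e => ⟨hq.rpow_const (Or.inl hq0), (hasDerivAt_id' p).rpow_const (Or.inl hp0)⟩
  refine (((hpow (β + 1)).1.add (hpow (β + 1)).2).sub
    ((((hpow β).1.const_mul (n / K)).add ((hpow β).2.const_mul ((K - n) / K))).const_mul
      ((β + 1) / β))).congr_deriv ?_
  simp only [add_sub_cancel_right, rpow_sub_one hp0, rpow_sub_one hq0]
  field_simp
  ring

theorem hasDerivAt_sum_weighted_dpdKernel {ι κ : Type*} [Fintype ι] [Fintype κ] {β Kt t₀ : ℝ}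
    {K n d : ι → κ → ℝ} {r : ι → κ → ℝ → ℝ} (hβ : β ≠ 0) (hK : ∀ i s, K i s ≠ 0)
    (hr : ∀ i s, HasDerivAt (r i s) (d i s) t₀) (hr01 : ∀ i s, r i s t₀ ∈ Set.Ioo 0 1) :
    HasDerivAt (fun t => ∑ i, ∑ s, K i s / Kt * dpdKernel β (K i s) (n i s) (r i s t))
      (-((β + 1) / Kt) * ∑ i, ∑ s, d i s * (K i s * (1 - r i s t₀) - n i s) *
        ((1 - r i s t₀) ^ (β - 1) + r i s t₀ ^ (β - 1))) t₀ := by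
  refine (HasDerivAt.fun_sum fun i _ => HasDerivAt.fun_sum fun s _ =>
    ((hasDerivAt_dpdKernel hβ (hK i s) (hr01 i s)).comp t₀ (hr i s)).const_mul
      (K i s / Kt)).congr_deriv ?_
  simp only [mul_sum]
  refine sum_congr rfl fun i _ => sum_congr rfl fun s _ => ?_
  field_simp [hK i s]

theorem stmt_8_general {I S J : ℕ} (hI : 1 ≤ I) (hS : 1 ≤ S)
    (β : ℝ) (hβ : 0 < β)
    (x : Fin S → Fin J → ℝ)
    (n K : Fin I → Fin S → ℕ)
    (hK : ∀ i s, 1 ≤ K i s)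
    (Ktot : ℕ) (hKtot : Ktot = ∑ i, ∑ s, K i s)
    (γ : ℝ → ℝ) (hγ : ∀ y, γ y = 1 - Real.exp (-Real.exp y))
    (G : (Fin I → ℝ) → Fin I → ℝ)
    (hG : ∀ η i, G η i = ∏ m ∈ Finset.Ici i, γ (η m))
    (lam : (Fin J → ℝ) → Fin S → ℝ)
    (hlam : ∀ α s, lam α s = Real.exp (∑ j, α j * x s j))
    (R : (Fin I → ℝ) → (Fin J → ℝ) → Fin I → Fin S → ℝ)
    (hR : ∀ η α i s, R η α i s = (1 - G η i) ^ (lam α s))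
    (F : (Fin I → ℝ) → (Fin J → ℝ) → ℝ)
    (hF : ∀ η α, F η α = ∑ i, ∑ s, ((K i s : ℝ) / (Ktot : ℝ)) *
        ((1 - R η α i s) ^ (β + 1) + (R η α i s) ^ (β + 1)
          - ((β + 1) / β) * (((n i s : ℝ) / (K i s : ℝ)) * (1 - R η α i s) ^ β
              + (((K i s : ℝ) - (n i s : ℝ)) / (K i s : ℝ)) * (R η α i s) ^ β)))
    (dG : (Fin I → ℝ) → Fin I → Fin I → ℝ)
    (hdG : ∀ η i u, dG η i u =
      if i ≤ u then Real.exp (η u) * Real.exp (-Real.exp (η u)) * G η i / γ (η u) else 0)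
    (δη : (Fin I → ℝ) → (Fin J → ℝ) → Fin I → Fin S → Fin I → ℝ)
    (hδη : ∀ η α i s u, δη η α i s u = -(1 - G η i) ^ (lam α s - 1) * lam α s * dG η i u)
    (δα : (Fin I → ℝ) → (Fin J → ℝ) → Fin I → Fin S → Fin J → ℝ)
    (hδα : ∀ η α i s j, δα η α i s j =
      (1 - G η i) ^ (lam α s) * Real.log (1 - G η i) * lam α s * x s j)
    (η : Fin I → ℝ) (α : Fin J → ℝ) :
    (∀ u : Fin I,
      HasDerivAt (fun t => F (Function.update η u t) α)
        (-((β + 1) / (Ktot : ℝ)) * ∑ i, ∑ s,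
          δη η α i s u * ((K i s : ℝ) * (1 - R η α i s) - (n i s : ℝ)) *
            ((1 - R η α i s) ^ (β - 1) + (R η α i s) ^ (β - 1))) (η u)) ∧
    (∀ j : Fin J,
      HasDerivAt (fun t => F η (Function.update α j t))
        (-((β + 1) / (Ktot : ℝ)) * ∑ i, ∑ s,
          δα η α i s j * ((K i s : ℝ) * (1 - R η α i s) - (n i s : ℝ)) *
            ((1 - R η α i s) ^ (β - 1) + (R η α i s) ^ (β - 1))) (α j)) ∧
    (((∀ u : Fin I, HasDerivAt (fun t => F (Function.update η u t) α) 0 (η u)) ∧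
      (∀ j : Fin J, HasDerivAt (fun t => F η (Function.update α j t)) 0 (α j))) ↔
     ((∀ u : Fin I, ∑ i, ∑ s,
          δη η α i s u * ((K i s : ℝ) * (1 - R η α i s) - (n i s : ℝ)) *
            ((1 - R η α i s) ^ (β - 1) + (R η α i s) ^ (β - 1)) = 0) ∧
      (∀ j : Fin J, ∑ i, ∑ s,
          δα η α i s j * ((K i s : ℝ) * (1 - R η α i s) - (n i s : ℝ)) *
            ((1 - R η α i s) ^ (β - 1) + (R η α i s) ^ (β - 1)) = 0))) := by
  have hKt : (0 : ℝ) < Ktot := by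
    have : Nonempty (Fin I) := ⟨⟨0, hI⟩⟩
    have : Nonempty (Fin S) := ⟨⟨0, hS⟩⟩
    subst hKtot
    exact_mod_cast sum_pos (fun i _ => sum_pos (fun s _ => hK i s) univ_nonempty) univ_nonempty
  have hK0 : ∀ i s, (K i s : ℝ) ≠ 0 := fun i s =>
    Nat.cast_ne_zero.2 (Nat.one_le_iff_ne_zero.1 (hK i s))
  have hγ01 : ∀ y, γ y ∈ Set.Ioo 0 1 := fun y => hγ y ▸ one_sub_exp_neg_exp_mem_Ioo y
  have hγ' : ∀ y, HasDerivAt γ (exp y * exp (-exp y)) y := by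
    rw [funext hγ]; exact hasDerivAt_one_sub_exp_neg_exp
  have hG01 : ∀ η i, G η i ∈ Set.Ioo 0 1 := fun η i =>
    hG η i ▸ prod_mem_Ioo_zero_one nonempty_Ici fun m _ => hγ01 _
  have hR01 : ∀ η α i s, R η α i s ∈ Set.Ioo 0 1 := fun η α i s =>
    hR η α i s ▸ one_sub_rpow_mem_Ioo (hG01 η i) (hlam α s ▸ exp_pos _)
  have hRη : ∀ u i s, HasDerivAt (fun t => R (update η u t) α i s) (δη η α i s u) (η u) := by
    intro u i s
    simpa only [hR, hG, hδη, hdG, mem_Ici] using hasDerivAt_one_sub_prod_comp_update_rpow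
      (Ici i) η (lam α s) (hγ' (η u)) (hγ01 _).1.ne' (hG η i ▸ (hG01 η i).2.ne)
  have hRα : ∀ j i s, HasDerivAt (fun t => R η (update α j t) i s) (δα η α i s j) (α j) := by
    intro j i s
    simpa only [hR, hlam, hδα] using
      hasDerivAt_rpow_exp_sum_update_mul (sub_pos.2 (hG01 η i).2) α (x s) j
  have hFη := fun u => by
    simpa only [update_eq_self] using
      (hasDerivAt_sum_weighted_dpdKernel (Kt := Ktot) (n := fun i s => (n i s : ℝ)) hβ.ne' hK0
        (hRη u) fun i s => hR01 _ _ i s).congr_of_eventuallyEq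
        (.of_forall fun t => hF (update η u t) α)
  have hFα := fun j => by
    simpa only [update_eq_self] using
      (hasDerivAt_sum_weighted_dpdKernel (Kt := Ktot) (n := fun i s => (n i s : ℝ)) hβ.ne' hK0
        (hRα j) fun i s => hR01 _ _ i s).congr_of_eventuallyEq
        (.of_forall fun t => hF η (update α j t))
  have hc : -((β + 1) / (Ktot : ℝ)) ≠ 0 := neg_ne_zero.2 (by positivity)
  exact ⟨hFη, hFα, and_congr (forall_congr' fun u => (hFη u).hasDerivAt_zero_iff_of_mul hc)
    (forall_congr' fun j => (hFα j).hasDerivAt_zero_iff_of_mul hc)⟩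

/-- Estimating equations for the weighted minimum DPD estimator under the
proportional hazards model: the partial derivatives of the weighted DPD objective `F`
with respect to `η_u` and `α_j`, and the characterization of critical points of `F`
by the estimating equations. -/
theorem stmt_8 {I S J : ℕ} (hI : 1 ≤ I) (hS : 1 ≤ S) (hJ : 1 ≤ J)
    (β : ℝ) (hβ : 0 < β)
    (x : Fin S → Fin J → ℝ)
    (n K : Fin I → Fin S → ℕ)
    (hK : ∀ i s, 1 ≤ K i s) (hn : ∀ i s, n i s ≤ K i s)
    (Ktot : ℕ) (hKtot : Ktot = ∑ i, ∑ s, K i s)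
    (γ : ℝ → ℝ) (hγ : ∀ y, γ y = 1 - Real.exp (-Real.exp y))
    (G : (Fin I → ℝ) → Fin I → ℝ)
    (hG : ∀ η i, G η i = ∏ m ∈ Finset.Ici i, γ (η m))
    (lam : (Fin J → ℝ) → Fin S → ℝ)
    (hlam : ∀ α s, lam α s = Real.exp (∑ j, α j * x s j))
    (R : (Fin I → ℝ) → (Fin J → ℝ) → Fin I → Fin S → ℝ)
    (hR : ∀ η α i s, R η α i s = (1 - G η i) ^ (lam α s))
    (F : (Fin I → ℝ) → (Fin J → ℝ) → ℝ)
    (hF : ∀ η α, F η α = ∑ i, ∑ s, ((K i s : ℝ) / (Ktot : ℝ)) *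
        ((1 - R η α i s) ^ (β + 1) + (R η α i s) ^ (β + 1)
          - ((β + 1) / β) * (((n i s : ℝ) / (K i s : ℝ)) * (1 - R η α i s) ^ β
              + (((K i s : ℝ) - (n i s : ℝ)) / (K i s : ℝ)) * (R η α i s) ^ β)))
    (dG : (Fin I → ℝ) → Fin I → Fin I → ℝ)
    (hdG : ∀ η i u, dG η i u =
      if i ≤ u then Real.exp (η u) * Real.exp (-Real.exp (η u)) * G η i / γ (η u) else 0)
    (δη : (Fin I → ℝ) → (Fin J → ℝ) → Fin I → Fin S → Fin I → ℝ)
    (hδη : ∀ η α i s u, δη η α i s u = -(1 - G η i) ^ (lam α s - 1) * lam α s * dG η i u)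
    (δα : (Fin I → ℝ) → (Fin J → ℝ) → Fin I → Fin S → Fin J → ℝ)
    (hδα : ∀ η α i s j, δα η α i s j =
      (1 - G η i) ^ (lam α s) * Real.log (1 - G η i) * lam α s * x s j)
    (η : Fin I → ℝ) (α : Fin J → ℝ) :
    (∀ u : Fin I,
      HasDerivAt (fun t => F (Function.update η u t) α)
        (-((β + 1) / (Ktot : ℝ)) * ∑ i, ∑ s,
          δη η α i s u * ((K i s : ℝ) * (1 - R η α i s) - (n i s : ℝ)) *
            ((1 - R η α i s) ^ (β - 1) + (R η α i s) ^ (β - 1))) (η u)) ∧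
    (∀ j : Fin J,
      HasDerivAt (fun t => F η (Function.update α j t))
        (-((β + 1) / (Ktot : ℝ)) * ∑ i, ∑ s,
          δα η α i s j * ((K i s : ℝ) * (1 - R η α i s) - (n i s : ℝ)) *
            ((1 - R η α i s) ^ (β - 1) + (R η α i s) ^ (β - 1))) (α j)) ∧
    (((∀ u : Fin I, HasDerivAt (fun t => F (Function.update η u t) α) 0 (η u)) ∧
      (∀ j : Fin J, HasDerivAt (fun t => F η (Function.update α j t)) 0 (α j))) ↔
     ((∀ u : Fin I, ∑ i, ∑ s,
          δη η α i s u * ((K i s : ℝ) * (1 - R η α i s) - (n i s : ℝ)) *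
            ((1 - R η α i s) ^ (β - 1) + (R η α i s) ^ (β - 1)) = 0) ∧
      (∀ j : Fin J, ∑ i, ∑ s,
          δα η α i s j * ((K i s : ℝ) * (1 - R η α i s) - (n i s : ℝ)) *
            ((1 - R η α i s) ^ (β - 1) + (R η α i s) ^ (β - 1)) = 0))) :=
  stmt_8_general hI hS β hβ x n K hK Ktot hKtot γ hγ G hG lam hlam R hR F hF dG hdG δη hδη δα hδα η
    α
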